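/- Let A ∈ ℝ^{n×n} be a symmetric matrix each of whose rows has Euclidean norm at most 1. Let ε > 0, let B > 0, and let u ∈ ℝⁿ with ‖u‖₁ ≤ B. Let s be a positive integer with s ≥ 9B⁴/ε², let S ⊆ {1,…,n} be a set with |S| = min(s, n) such that |u_i| ≥ |u_j| for all i ∈ S and j ∉ S, and define z ∈ ℝⁿ by z_i = u_i for i ∈ S and z_i = 0 for i ∉ S. Then zᵀAz ≥ uᵀAu − ε. -/

import Mathlib

/-!
Split `u = z + w` with `w` the tail of `u` outside `S`. For symmetric `A` the quadratic form
expands as `zᵀAz + 2 zᵀAw + wᵀAw`, and a matrix whose rows have unit Euclidean norm satisfies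
`|xᵀAy| ≤ ‖x‖₁ ‖y‖₂`, so the two cross terms cost at most `3B ‖w‖₂`. Every tail entry is at
most the average `B / s` of the top `s` entries, hence `‖w‖₂² ≤ (B / s) ‖w‖₁ ≤ B² / s`, and
`s ≥ 9B⁴/ε²` makes `3B ‖w‖₂ ≤ ε`.
-/

open Matrix

/-- Euclidean (ℓ₂) norm of a vector in ℝⁿ. -/
noncomputable def l2norm {n : ℕ} (x : Fin n → ℝ) : ℝ := Real.sqrt (∑ i, (x i) ^ 2)

/-- ℓ₁ norm of a vector in ℝⁿ. -/
def l1norm {n : ℕ} (x : Fin n → ℝ) : ℝ := ∑ i, |x i|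

lemma l2norm_nonneg {n : ℕ} (x : Fin n → ℝ) : 0 ≤ l2norm x := Real.sqrt_nonneg _

lemma l1norm_le_l1norm {n : ℕ} {x y : Fin n → ℝ} (h : ∀ i, |x i| ≤ |y i|) :
    l1norm x ≤ l1norm y :=
  Finset.sum_le_sum fun i _ => h i

lemma abs_dotProduct_le_l2norm_mul_l2norm {n : ℕ} (x y : Fin n → ℝ) :
    |x ⬝ᵥ y| ≤ l2norm x * l2norm y := by
  calc |x ⬝ᵥ y| ≤ ∑ i, |x i| * |y i| := by
        simpa only [dotProduct, abs_mul] using Finset.abs_sum_le_sum_abs (fun i => x i * y i) _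
    _ ≤ l2norm x * l2norm y := by
        simpa only [l2norm, sq_abs] using
          Real.sum_mul_le_sqrt_mul_sqrt Finset.univ (fun i => |x i|) (fun i => |y i|)

section UnitRows

variable {n : ℕ} {A : Matrix (Fin n) (Fin n) ℝ}

lemma abs_mulVec_apply_le_l2norm (hrows : ∀ i, l2norm (A i) ≤ 1) (y : Fin n → ℝ) (i : Fin n) :
    |(A *ᵥ y) i| ≤ l2norm y :=
  calc |(A *ᵥ y) i| ≤ l2norm (A i) * l2norm y := abs_dotProduct_le_l2norm_mul_l2norm (A i) y
    _ ≤ l2norm y := mul_le_of_le_one_left (l2norm_nonneg y) (hrows i)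

lemma abs_dotProduct_mulVec_le_l1norm_mul_l2norm (hrows : ∀ i, l2norm (A i) ≤ 1)
    (x y : Fin n → ℝ) : |x ⬝ᵥ A *ᵥ y| ≤ l1norm x * l2norm y := by
  calc |x ⬝ᵥ A *ᵥ y| ≤ ∑ i, |x i| * |(A *ᵥ y) i| := by
        simpa only [dotProduct, abs_mul] using
          Finset.abs_sum_le_sum_abs (fun i => x i * (A *ᵥ y) i) _
    _ ≤ ∑ i, |x i| * l2norm y := by
        gcongr with i
        exact abs_mulVec_apply_le_l2norm hrows y i
    _ = l1norm x * l2norm y := by rw [l1norm, Finset.sum_mul]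

end UnitRows

lemma add_dotProduct_mulVec_add_of_isSymm {ι R : Type*} [Fintype ι] [CommRing R]
    {A : Matrix ι ι R} (hA : A.IsSymm) (z w : ι → R) :
    (z + w) ⬝ᵥ A *ᵥ (z + w) = z ⬝ᵥ A *ᵥ z + 2 * (z ⬝ᵥ A *ᵥ w) + w ⬝ᵥ A *ᵥ w := by
  have hcross : w ⬝ᵥ A *ᵥ z = z ⬝ᵥ A *ᵥ w := by
    rw [dotProduct_mulVec, ← mulVec_transpose, hA.eq, dotProduct_comm]
  rw [mulVec_add, add_dotProduct, dotProduct_add, dotProduct_add, hcross]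
  ring

lemma add_dotProduct_mulVec_add_sub_le {n : ℕ} {A : Matrix (Fin n) (Fin n) ℝ} (hA : A.IsSymm)
    (hrows : ∀ i, l2norm (A i) ≤ 1) (z w : Fin n → ℝ) :
    (z + w) ⬝ᵥ A *ᵥ (z + w) - (2 * l1norm z + l1norm w) * l2norm w ≤ z ⬝ᵥ A *ᵥ z := by
  have hzw := abs_le.mp (abs_dotProduct_mulVec_le_l1norm_mul_l2norm hrows z w)
  have hww := abs_le.mp (abs_dotProduct_mulVec_le_l1norm_mul_l2norm hrows w w)
  rw [add_dotProduct_mulVec_add_of_isSymm hA]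
  linarith [hzw.1, hww.1]

lemma sq_l2norm_le_mul_l1norm {n : ℕ} {w : Fin n → ℝ} {c : ℝ} (hw : ∀ i, |w i| ≤ c) :
    l2norm w ^ 2 ≤ c * l1norm w := by
  rw [l2norm, Real.sq_sqrt (Finset.sum_nonneg fun _ _ => sq_nonneg _), l1norm, Finset.mul_sum]
  gcongr with i
  rw [← sq_abs, sq]
  exact mul_le_mul_of_nonneg_right (hw i) (abs_nonneg _)

lemma card_mul_abs_le_l1norm {n : ℕ} {u : Fin n → ℝ} {S : Finset (Fin n)} {j : Fin n}
    (hS : ∀ i ∈ S, |u j| ≤ |u i|) : S.card * |u j| ≤ l1norm u := by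
  calc S.card * |u j| = ∑ _i ∈ S, |u j| := by rw [Finset.sum_const, nsmul_eq_mul]
    _ ≤ ∑ i ∈ S, |u i| := Finset.sum_le_sum hS
    _ ≤ l1norm u := Finset.sum_le_sum_of_subset_of_nonneg (Finset.subset_univ S)
        fun i _ _ => abs_nonneg (u i)

lemma natCast_mul_abs_le_l1norm_of_notMem {n s : ℕ} {u : Fin n → ℝ} {S : Finset (Fin n)}
    {j : Fin n} (hScard : S.card = min s n) (hj : j ∉ S) (hS : ∀ i ∈ S, |u j| ≤ |u i|) :
    s * |u j| ≤ l1norm u := by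
  have hcard : S.card = s := by
    have := Finset.card_lt_univ_of_notMem hj
    simp only [Fintype.card_fin] at this
    omega
  simpa only [hcard] using card_mul_abs_le_l1norm hS

/-- **Core quantitative step of Theorem 3.1.**  Let `A` be symmetric with rows of
Euclidean norm at most `1`, let `‖u‖₁ ≤ B`, and let `z` keep the `s ≥ 9B⁴/ε²`
largest-magnitude coordinates of `u` and zero the rest.  Then `zᵀAz ≥ uᵀAu − ε`. -/
theorem stmt11 {n : ℕ} (A : Matrix (Fin n) (Fin n) ℝ) (hA : A.IsSymm)
    (hrows : ∀ i : Fin n, l2norm (A i) ≤ 1)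
    (ε : ℝ) (hε : 0 < ε) (B : ℝ) (hB : 0 < B)
    (u : Fin n → ℝ) (hu : l1norm u ≤ B)
    (s : ℕ) (hs : 1 ≤ s) (hsB : 9 * B ^ 4 / ε ^ 2 ≤ (s : ℝ))
    (S : Finset (Fin n)) (hScard : S.card = min s n)
    (hStop : ∀ i ∈ S, ∀ j ∉ S, |u j| ≤ |u i|)
    (z : Fin n → ℝ) (hz : ∀ i, z i = if i ∈ S then u i else 0) :
    u ⬝ᵥ A.mulVec u - ε ≤ z ⬝ᵥ A.mulVec z := by
  have hspos : (0 : ℝ) < s := by exact_mod_cast hs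
  have hzu : ∀ i, |z i| ≤ |u i| := fun i => by rw [hz]; split_ifs <;> simp
  have hwu : ∀ i, |(u - z) i| ≤ |u i| := fun i => by rw [Pi.sub_apply, hz]; split_ifs <;> simp
  have htail : ∀ j, |(u - z) j| ≤ B / s := by
    intro j
    rw [Pi.sub_apply, hz]
    split_ifs with hj
    · rw [sub_self, abs_zero]
      positivity
    · rw [sub_zero, le_div_iff₀ hspos, mul_comm]
      exact (natCast_mul_abs_le_l1norm_of_notMem hScard hj fun i hi => hStop i hi j hj).trans hu
  have hL : l2norm (u - z) ^ 2 ≤ B ^ 2 / s :=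
    calc l2norm (u - z) ^ 2 ≤ B / s * l1norm (u - z) := sq_l2norm_le_mul_l1norm htail
      _ ≤ B / s * B := by gcongr; exact (l1norm_le_l1norm hwu).trans hu
      _ = B ^ 2 / s := by ring
  have hcost : 3 * B * l2norm (u - z) ≤ ε := by
    rw [div_le_iff₀ (by positivity)] at hsB
    rw [le_div_iff₀ hspos] at hL
    refine (pow_le_pow_iff_left₀ (by positivity [l2norm_nonneg (u - z)]) hε.le two_ne_zero).mp ?_
    nlinarith
  have hquad := add_dotProduct_mulVec_add_sub_le hA hrows z (u - z)
  rw [add_sub_cancel] at hquad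
  have hl1 : 2 * l1norm z + l1norm (u - z) ≤ 3 * B := by
    linarith [(l1norm_le_l1norm hzu).trans hu, (l1norm_le_l1norm hwu).trans hu]
  have hcross : (2 * l1norm z + l1norm (u - z)) * l2norm (u - z) ≤ ε :=
    (mul_le_mul_of_nonneg_right hl1 (l2norm_nonneg _)).trans hcost
  linarith
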